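/- arXiv:2012.00903 — 8 statements merged into one kernel-verified Lean document; each statement's English description precedes it below -/
import Mathlib

section
/- Let B be a commutative unital C*-algebra and let α : B → B be a positive linear map (i.e. α(b) ≥ 0 whenever b ≥ 0). Then for every b ∈ B one has |α(b)| ≤ α(|b|). -/
/-!
Characters of a commutative C*-algebra detect its order (Gelfand duality) and send `|x|` to the
modulus of their value at `x`. Fix a character `φ` and a unimodular `u` with
`u * φ (α b) = ‖φ (α b)‖`. Checked character by character, `ℜ (u • b) ≤ |b|`; a positive map
commutes with `star`, hence with real parts, so
`|φ (α b)| = φ (α (ℜ (u • b))) ≤ φ (α |b|)`.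
-/

/-- The absolute value `(a* a)^{1/2}` of an element of a C*-algebra. -/
noncomputable def cabs {B : Type*} [CStarAlgebra B] [PartialOrder B] [StarOrderedRing B]
    (b : B) : B := CFC.sqrt (star b * b)

open ComplexOrder ComplexStarModule Complex

namespace WeakDual.CharacterSpace

section

variable {B : Type*} [CommCStarAlgebra B]

lemma apply_realPart (φ : characterSpace ℂ B) (y : B) : φ (ℜ y) = ((φ y).re : ℂ) := by
  rw [map_realPart, coe_realPart]

end

variable {B : Type*} [CommCStarAlgebra B] [PartialOrder B] [StarOrderedRing B]

lemma le_iff_forall_apply_le {a c : B} : a ≤ c ↔ ∀ φ : characterSpace ℂ B, φ a ≤ φ c := by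
  rw [← map_le_map_iff (gelfandStarTransform B), ContinuousMap.le_def]
  rfl

lemma apply_cabs (φ : characterSpace ℂ B) (x : B) : φ (cabs x) = ‖φ x‖ := by
  have hφ : φ (cabs x) * φ (cabs x) = star (φ x) * φ x := by
    rw [← map_star, ← map_mul, ← map_mul, cabs, CFC.sqrt_mul_sqrt_self _ (star_mul_self_nonneg x)]
  have hnorm : (‖φ x‖ : ℂ) * ‖φ x‖ = star (φ x) * φ x := by
    rw [star_def, conj_mul', sq]
  rw [← CFC.sqrt_unique hφ (map_nonneg φ (CFC.sqrt_nonneg _)),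
    CFC.sqrt_unique hnorm (by exact_mod_cast norm_nonneg _)]

end WeakDual.CharacterSpace

open WeakDual.CharacterSpace

lemma realPart_smul_le_cabs {B : Type*} [CommCStarAlgebra B] [PartialOrder B] [StarOrderedRing B]
    {u : ℂ} (hu : ‖u‖ ≤ 1) (b : B) : (ℜ (u • b) : B) ≤ cabs b := by
  refine le_iff_forall_apply_le.mpr fun φ ↦ ?_
  rw [apply_realPart, apply_cabs, map_smul, smul_eq_mul, real_le_real]
  calc (u * φ b).re ≤ ‖u * φ b‖ := re_le_norm _
    _ ≤ ‖φ b‖ := by rw [norm_mul]; exact mul_le_of_le_one_left (norm_nonneg _) hu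

/-- If `B` is a commutative unital C*-algebra and `α : B → B` is a positive linear map,
then `|α(b)| ≤ α(|b|)` for every `b ∈ B`. -/
theorem abs_apply_le_apply_abs_of_positive
    {B : Type*} [CommCStarAlgebra B] [PartialOrder B] [StarOrderedRing B]
    (α : B →ₗ[ℂ] B) (hα : ∀ b : B, 0 ≤ b → 0 ≤ α b) (b : B) :
    cabs (α b) ≤ α (cabs b) := by
  let f : B →ₚ[ℂ] B := .mk₀ α hα
  refine le_iff_forall_apply_le.mpr fun φ ↦ ?_
  obtain ⟨u, hu, hz⟩ := exists_norm_eq_mul_self (φ (α b))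
  calc φ (cabs (α b)) = ‖φ (α b)‖ := apply_cabs φ _
    _ = ((u * φ (α b)).re : ℂ) := by rw [← hz, ofReal_re]
    _ = φ (f (ℜ (u • b))) := by rw [map_realPart, apply_realPart, map_smul, map_smul]; rfl
    _ ≤ φ (α (cabs b)) := OrderHomClass.mono φ <| OrderHomClass.mono f <|
        realPart_smul_le_cabs hu.le b
end

section
/- Let A be a unital C*-algebra, φ a faithful state on A, and x ∈ A. Then limsup_{n→∞} (φ((x* x)^n))^{1/(2n)} = ‖x‖. -/
open Filter Topology
open scoped ComplexOrder

/-! With `a = x⋆x` we have `‖a‖ = ‖x‖²`, and it suffices to show `φ(aⁿ)^{1/n} → ‖a‖`.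
Since `aⁿ ≤ ‖a‖ⁿ • 1`, `φ(aⁿ) ≤ ‖a‖ⁿ`. Conversely, for `0 < r < ‖a‖` let `b = f(a)` with
`0 ≤ f ≤ 1` continuous, `f = 0` on `(-∞, r]` and `f(‖a‖) = 1`; as `‖a‖ ∈ σ(a)`, `b ≠ 0`, and
`rⁿ b⋆b ≤ aⁿ` by the functional calculus. Faithfulness gives `c = φ(b⋆b) > 0`, so
`c rⁿ ≤ φ(aⁿ) ≤ ‖a‖ⁿ`, and taking `n`-th roots the limsup is in fact a limit. -/

theorem tendsto_const_rpow_inv_natCast {c : ℝ} (hc : 0 < c) :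
    Tendsto (fun n : ℕ => c ^ (n : ℝ)⁻¹) atTop (𝓝 1) := by
  simpa [Function.comp_def] using ((Real.continuousAt_const_rpow hc.ne').tendsto).comp
    (tendsto_inv_atTop_zero.comp tendsto_natCast_atTop_atTop)

theorem tendsto_rpow_inv_natCast_of_pow_bounds {y : ℕ → ℝ} {L : ℝ} (hy : ∀ n, 0 ≤ y n)
    (hupper : ∀ n, 0 < n → y n ≤ L ^ n)
    (hlower : ∀ s, 0 < s → s < L → ∃ c > 0, ∀ n, c * s ^ n ≤ y n) :
    Tendsto (fun n : ℕ => y n ^ (n : ℝ)⁻¹) atTop (𝓝 L) := by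
  have hL : 0 ≤ L := by simpa using (hy 1).trans (hupper 1 one_pos)
  refine tendsto_order.2 ⟨fun l hl => ?_, fun l hl => ?_⟩
  · rcases lt_or_ge l 0 with hl0 | hl0
    · exact .of_forall fun n => hl0.trans_le (Real.rpow_nonneg (hy n) _)
    obtain ⟨s, hls, hsL⟩ := exists_between hl
    have hs : 0 < s := hl0.trans_lt hls
    obtain ⟨c, hc, hcy⟩ := hlower s hs hsL
    have hlim : Tendsto (fun n : ℕ => c ^ (n : ℝ)⁻¹ * s) atTop (𝓝 s) := by
      simpa using (tendsto_const_rpow_inv_natCast hc).mul_const s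
    filter_upwards [hlim.eventually_const_lt hls, eventually_gt_atTop 0] with n hn hn0
    calc l < c ^ (n : ℝ)⁻¹ * s := hn
      _ = (c * s ^ n) ^ (n : ℝ)⁻¹ := by
        rw [Real.mul_rpow hc.le (by positivity), Real.pow_rpow_inv_natCast hs.le hn0.ne']
      _ ≤ y n ^ (n : ℝ)⁻¹ := Real.rpow_le_rpow (by positivity) (hcy n) (by positivity)
  · filter_upwards [eventually_gt_atTop 0] with n hn
    calc y n ^ (n : ℝ)⁻¹ ≤ (L ^ n) ^ (n : ℝ)⁻¹ :=
          Real.rpow_le_rpow (hy n) (hupper n hn) (by positivity)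
      _ = L := Real.pow_rpow_inv_natCast hL hn.ne'
      _ < l := hl

theorem re_map_le_re_map {A : Type*} [AddCommGroup A] [PartialOrder A] [IsOrderedAddMonoid A]
    [Module ℂ A] {φ : A →ₗ[ℂ] ℂ} (hpos : ∀ x : A, 0 ≤ x → 0 ≤ φ x) {b c : A} (h : b ≤ c) :
    (φ b).re ≤ (φ c).re :=
  Complex.re_le_re (OrderHomClass.mono (PositiveLinearMap.mk₀ φ hpos) h)

section CStarAlgebra

variable {A : Type*} [CStarAlgebra A] [PartialOrder A] [StarOrderedRing A]

theorem re_map_le_norm_of_isSelfAdjoint {φ : A →ₗ[ℂ] ℂ} (hpos : ∀ x : A, 0 ≤ x → 0 ≤ φ x)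
    (hone : φ 1 = 1) {a : A} (ha : IsSelfAdjoint a) : (φ a).re ≤ ‖a‖ := by
  have h := re_map_le_re_map hpos ha.le_algebraMap_norm_self
  rwa [Algebra.algebraMap_eq_smul_one, LinearMap.map_smul_of_tower, hone, Complex.real_smul,
    mul_one, Complex.ofReal_re] at h

theorem re_map_star_mul_self_pos {φ : A →ₗ[ℂ] ℂ} (hpos : ∀ x : A, 0 ≤ x → 0 ≤ φ x)
    (hfaithful : ∀ x : A, φ (star x * x) = 0 → x = 0) {b : A} (hb : b ≠ 0) :
    0 < (φ (star b * b)).re := by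
  have h := hpos _ (star_mul_self_nonneg b)
  have hne : φ (star b * b) ≠ 0 := mt (hfaithful b) hb
  exact (Complex.lt_def.1 (lt_of_le_of_ne h hne.symm)).1

theorem exists_ne_zero_pow_smul_star_mul_self_le_pow {a : A} (ha : 0 ≤ a) {r : ℝ} (hr : 0 ≤ r)
    (hra : r < ‖a‖) : ∃ b : A, b ≠ 0 ∧ ∀ n : ℕ, r ^ n • (star b * b) ≤ a ^ n := by
  obtain ⟨f, hf_cont, hf_nonneg, hf_le_one, hf_of_le, hf_norm⟩ : ∃ f : ℝ → ℝ, Continuous f ∧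
      (∀ t, 0 ≤ f t) ∧ (∀ t, f t ≤ 1) ∧ (∀ t ≤ r, f t = 0) ∧ f ‖a‖ = 1 := by
    refine ⟨fun t => max 0 (min 1 ((t - r) / (‖a‖ - r))), by fun_prop, fun t => le_max_left _ _,
      fun t => max_le zero_le_one (min_le_left _ _), fun t ht => ?_, ?_⟩
    · exact max_eq_left <| (min_le_right _ _).trans <|
        div_nonpos_of_nonpos_of_nonneg (by linarith) (by linarith)
    · simp [div_self (sub_pos.2 hra).ne']
  have : Nontrivial A := nontrivial_of_ne a 0 (norm_pos_iff.1 (hr.trans_lt hra))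
  refine ⟨cfc f a, fun h => ?_, fun n => ?_⟩
  · have := eqOn_of_cfc_eq_cfc (h.trans (cfc_zero ℝ a).symm)
      |>.eq_of_mem (CStarAlgebra.norm_mem_spectrum_of_nonneg ha)
    simp [hf_norm] at this
  · rw [(cfc_predicate f a).star_eq, ← cfc_mul f f a, ← cfc_smul (r ^ n) (fun t => f t * f t) a,
      ← cfc_pow_id (R := ℝ) a n]
    refine cfc_mono fun t ht => ?_
    have ht0 : 0 ≤ t := spectrum_nonneg_of_nonneg ha ht
    rcases le_or_gt t r with htr | htr
    · rw [hf_of_le t htr, mul_zero, smul_zero]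
      positivity
    · calc r ^ n • (f t * f t) ≤ r ^ n * 1 := by
            rw [smul_eq_mul]; gcongr; nlinarith [hf_nonneg t, hf_le_one t]
        _ ≤ t ^ n := by rw [mul_one]; gcongr

end CStarAlgebra

/-- If `φ` is a faithful state on a unital C*-algebra `A` and `x ∈ A`, then
`limsup_{n → ∞} φ((x* x)ⁿ)^{1/(2n)} = ‖x‖`. -/
theorem limsup_rpow_state_pow_eq_norm
    {A : Type*} [CStarAlgebra A] [PartialOrder A] [StarOrderedRing A]
    (φ : A →ₗ[ℂ] ℂ) (hpos : ∀ x : A, 0 ≤ x → 0 ≤ φ x) (hone : φ 1 = 1)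
    (hfaithful : ∀ x : A, φ (star x * x) = 0 → x = 0)
    (x : A) :
    limsup (fun n : ℕ => (φ ((star x * x) ^ n)).re ^ ((1 : ℝ) / (2 * n))) atTop = ‖x‖ := by
  set a := star x * x
  have ha : 0 ≤ a := star_mul_self_nonneg x
  have hnonneg (n : ℕ) : 0 ≤ (φ (a ^ n)).re := by
    simpa using re_map_le_re_map hpos (CStarAlgebra.pow_nonneg ha n)
  have hlim : Tendsto (fun n : ℕ => (φ (a ^ n)).re ^ (n : ℝ)⁻¹) atTop (𝓝 ‖a‖) := by
    refine tendsto_rpow_inv_natCast_of_pow_bounds hnonneg (fun n hn => ?_) fun s hs hsa => ?_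
    · exact (re_map_le_norm_of_isSelfAdjoint hpos hone ((IsSelfAdjoint.of_nonneg ha).pow n)).trans
        (norm_pow_le' a hn)
    · obtain ⟨b, hb, hba⟩ := exists_ne_zero_pow_smul_star_mul_self_le_pow ha hs.le hsa
      refine ⟨_, re_map_star_mul_self_pos hpos hfaithful hb, fun n => ?_⟩
      have h := re_map_le_re_map hpos (hba n)
      rwa [LinearMap.map_smul_of_tower, Complex.smul_re, smul_eq_mul, mul_comm] at h
  have hnorm : ‖a‖ ^ (2⁻¹ : ℝ) = ‖x‖ := by
    rw [CStarRing.norm_star_mul_self, ← sq]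
    exact_mod_cast Real.pow_rpow_inv_natCast (norm_nonneg x) two_ne_zero
  refine Tendsto.limsup_eq ?_
  rw [← hnorm]
  refine (hlim.rpow_const (Or.inr (by norm_num))).congr fun n => ?_
  rw [← Real.rpow_mul (hnonneg n)]
  congr 1
  ring
end

section
/- Let A be a unital C*-algebra, B ⊆ A a unital C*-subalgebra, and E : A → B a faithful conditional expectation onto B. Then for every x ∈ A, limsup_{n→∞} ‖E((x* x)^n)‖^{1/(2n)} = ‖x‖. -/
/-!
With `a = x⋆x` we have `‖a‖ = ‖x‖²`, so it suffices that `‖E(aⁿ)‖^{1/n} → ‖a‖`. Contractivity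
gives `‖E(aⁿ)‖ ≤ ‖a‖ⁿ`. Conversely, for `μ < ‖a‖` the functional calculus produces a nonzero
`b = g(a) ≥ 0`, with `g` supported on `[μ, ∞)`, such that `μⁿ b ≤ aⁿ` for all `n`; positivity of
`E` then gives `μⁿ ‖E b‖ ≤ ‖E(aⁿ)‖`, and faithfulness gives `E b ≠ 0`.
-/

open Filter

/-- `E : A → A` is a conditional expectation onto the C*-subalgebra `B`:
it takes values in `B`, fixes `B`, is a `B`-bimodule map, and is positive and contractive. -/
structure IsCondExp {A : Type*} [CStarAlgebra A] [PartialOrder A] [StarOrderedRing A]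
    (B : StarSubalgebra ℂ A) (E : A →ₗ[ℂ] A) : Prop where
  mem_range : ∀ x : A, E x ∈ B
  fixes : ∀ b ∈ B, E b = b
  bimodule : ∀ b₁ ∈ B, ∀ b₂ ∈ B, ∀ x : A, E (b₁ * x * b₂) = b₁ * E x * b₂
  positive : ∀ x : A, 0 ≤ x → 0 ≤ E x
  contractive : ∀ x : A, ‖E x‖ ≤ ‖x‖

open Topology

theorem Real.tendsto_rpow_inv_natCast_nhds_one {c : ℝ} (hc : 0 < c) :
    Tendsto (fun n : ℕ => c ^ (n⁻¹ : ℝ)) atTop (𝓝 1) := by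
  have h := (Real.continuousAt_const_rpow hc.ne').tendsto.comp
    (tendsto_inv_atTop_zero.comp tendsto_natCast_atTop_atTop)
  rwa [Real.rpow_zero] at h

theorem tendsto_rpow_inv_natCast_of_geom_bounds {u : ℕ → ℝ} {s : ℝ} (hs : 0 ≤ s)
    (hu : ∀ n, 0 ≤ u n) (hupper : ∀ᶠ n in atTop, u n ≤ s ^ n)
    (hlower : ∀ m, 0 < m → m < s → ∃ c > 0, ∀ᶠ n in atTop, c * m ^ n ≤ u n) :
    Tendsto (fun n : ℕ => u n ^ (n⁻¹ : ℝ)) atTop (𝓝 s) := by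
  refine tendsto_order.2 ⟨fun l hl => ?_, fun r hr => ?_⟩
  · rcases lt_or_ge l 0 with hl0 | hl0
    · exact .of_forall fun n => hl0.trans_le (Real.rpow_nonneg (hu n) _)
    obtain ⟨m, hlm, hms⟩ := exists_between hl
    have hm : 0 < m := hl0.trans_lt hlm
    obtain ⟨c, hc, hcu⟩ := hlower m hm hms
    have hlim : Tendsto (fun n : ℕ => c ^ (n⁻¹ : ℝ) * m) atTop (𝓝 m) := by
      simpa using (Real.tendsto_rpow_inv_natCast_nhds_one hc).mul_const m
    filter_upwards [hlim.eventually (lt_mem_nhds hlm), hcu, eventually_ne_atTop 0]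
      with n hlt hcn hn
    calc l < c ^ (n⁻¹ : ℝ) * m := hlt
      _ = (c * m ^ n) ^ (n⁻¹ : ℝ) := by
        rw [Real.mul_rpow hc.le (by positivity), Real.pow_rpow_inv_natCast hm.le hn]
      _ ≤ u n ^ (n⁻¹ : ℝ) := by gcongr
  · filter_upwards [hupper, eventually_ne_atTop 0] with n hun hn
    calc u n ^ (n⁻¹ : ℝ) ≤ (s ^ n) ^ (n⁻¹ : ℝ) := by gcongr; exact hu n
      _ = s := Real.pow_rpow_inv_natCast hs hn
      _ < r := hr

section CStarAlgebra

variable {A C : Type*} [CStarAlgebra A] [PartialOrder A] [StarOrderedRing A] [CStarAlgebra C]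

theorem eq_zero_of_nonneg_of_map_eq_zero {E : A →ₗ[ℂ] C}
    (hE : ∀ x, E (star x * x) = 0 → x = 0) {b : A} (hb : 0 ≤ b) (hEb : E b = 0) : b = 0 := by
  obtain ⟨y, rfl⟩ := CStarAlgebra.nonneg_iff_eq_star_mul_self.mp hb
  rw [hE y hEb, star_zero, zero_mul]

theorem norm_map_le_norm_map_of_le [PartialOrder C] [StarOrderedRing C] {E : A →ₗ[ℂ] C}
    (hE : ∀ x, 0 ≤ x → 0 ≤ E x) {x y : A} (hx : 0 ≤ x) (hxy : x ≤ y) : ‖E x‖ ≤ ‖E y‖ :=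
  CStarAlgebra.norm_le_norm_of_nonneg_of_le (hE x hx)
    (sub_nonneg.1 (by simpa only [map_sub] using hE _ (sub_nonneg.2 hxy)))

theorem exists_nonneg_ne_zero_smul_le_pow {a : A} (ha : 0 ≤ a) {μ : ℝ} (hμ : 0 ≤ μ)
    (hμa : μ < ‖a‖) : ∃ b : A, 0 ≤ b ∧ b ≠ 0 ∧ ∀ n : ℕ, μ ^ n • b ≤ a ^ n := by
  have : Nontrivial A := ⟨⟨a, 0, norm_pos_iff.1 (hμ.trans_lt hμa)⟩⟩
  set g : ℝ → ℝ := fun t => max (t - μ) 0 / ‖a‖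
  have hg_le : ∀ t ∈ spectrum ℝ a, ∀ n : ℕ, μ ^ n * g t ≤ t ^ n := by
    intro t ht n
    have ht0 : 0 ≤ t := spectrum_nonneg_of_nonneg ha ht
    have hta : t ≤ ‖a‖ := (Real.le_norm_self t).trans (spectrum.norm_le_norm_of_mem ht)
    rcases le_or_gt t μ with htμ | hμt
    · simp [g, max_eq_right (sub_nonpos.2 htμ), ht0]
    · calc μ ^ n * g t ≤ μ ^ n * 1 := by
            gcongr
            exact div_le_one_of_le₀ (max_le (by linarith) (norm_nonneg a)) (norm_nonneg a)
        _ ≤ t ^ n := by rw [mul_one]; gcongr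
  refine ⟨cfc g a, cfc_nonneg fun t _ => by positivity, fun h => ?_, fun n => ?_⟩
  · have hg_eq_zero :=
      eqOn_of_cfc_eq_cfc (h.trans (cfc_zero ℝ a).symm) (hg := continuousOn_const)
    have hg_pos : 0 < g ‖a‖ := div_pos (lt_max_of_lt_left (sub_pos.2 hμa)) (hμ.trans_lt hμa)
    exact hg_pos.ne' (hg_eq_zero (CStarAlgebra.norm_mem_spectrum_of_nonneg ha))
  · rw [← cfc_const_mul .., ← cfc_pow_id (R := ℝ) a n]
    exact cfc_mono fun t ht => hg_le t ht n

end CStarAlgebra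

theorem limsup_rpow_norm_condexp_pow_eq_norm_general
    {A : Type*} [CStarAlgebra A] [PartialOrder A] [StarOrderedRing A]
    (B : StarSubalgebra ℂ A)
    (E : A →ₗ[ℂ] A) (hE : IsCondExp B E)
    (hfaithful : ∀ x : A, E (star x * x) = 0 → x = 0)
    (x : A) :
    limsup (fun n : ℕ => ‖E ((star x * x) ^ n)‖ ^ ((1 : ℝ) / (2 * n))) atTop = ‖x‖ := by
  set a := star x * x
  have ha : 0 ≤ a := star_mul_self_nonneg x
  have hupper : ∀ᶠ n in atTop, ‖E (a ^ n)‖ ≤ ‖a‖ ^ n := by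
    filter_upwards [eventually_ne_atTop 0] with n hn
    exact (hE.contractive _).trans (norm_pow_le' a (Nat.pos_of_ne_zero hn))
  have hlower (μ : ℝ) (hμ : 0 < μ) (hμa : μ < ‖a‖) :
      ∃ c > 0, ∀ᶠ n in atTop, c * μ ^ n ≤ ‖E (a ^ n)‖ := by
    obtain ⟨b, hb, hb0, hba⟩ := exists_nonneg_ne_zero_smul_le_pow ha hμ.le hμa
    refine ⟨‖E b‖, norm_pos_iff.2 fun h => hb0 (eq_zero_of_nonneg_of_map_eq_zero hfaithful hb h),
      .of_forall fun n => ?_⟩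
    have := norm_map_le_norm_map_of_le hE.positive (smul_nonneg (by positivity) hb) (hba n)
    rwa [E.map_smul_of_tower, norm_smul, Real.norm_of_nonneg (by positivity), mul_comm] at this
  have hlim := (tendsto_rpow_inv_natCast_of_geom_bounds (norm_nonneg a) (fun _ => norm_nonneg _)
    hupper hlower).rpow_const (p := (2 : ℝ)⁻¹) (.inr (by norm_num))
  have hsqrt : ‖a‖ ^ (2 : ℝ)⁻¹ = ‖x‖ := by
    rw [CStarRing.norm_star_mul_self, ← sq]
    exact_mod_cast Real.pow_rpow_inv_natCast (norm_nonneg x) two_ne_zero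
  refine (hsqrt ▸ hlim.congr fun n => ?_).limsup_eq
  rw [← Real.rpow_mul (norm_nonneg _)]
  congr 1
  ring

/-- If `E` is a faithful conditional expectation from a unital C*-algebra `A` onto a unital
C*-subalgebra `B`, then for every `x ∈ A`,
`limsup_{n → ∞} ‖E((x* x)ⁿ)‖^{1/(2n)} = ‖x‖`. -/
theorem limsup_rpow_norm_condexp_pow_eq_norm
    {A : Type*} [CStarAlgebra A] [PartialOrder A] [StarOrderedRing A]
    (B : StarSubalgebra ℂ A) (hBclosed : IsClosed (B : Set A))
    (E : A →ₗ[ℂ] A) (hE : IsCondExp B E)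
    (hfaithful : ∀ x : A, E (star x * x) = 0 → x = 0)
    (x : A) :
    limsup (fun n : ℕ => ‖E ((star x * x) ^ n)‖ ^ ((1 : ℝ) / (2 * n))) atTop = ‖x‖ :=
  limsup_rpow_norm_condexp_pow_eq_norm_general B E hE hfaithful x
end

section
/- Let A be a unital C*-algebra, B ⊆ A a commutative unital C*-subalgebra, and E : A → B a conditional expectation onto B. Let T ∈ A satisfy E(b₀ T b₁ T b₂ ⋯ T b_p) = 0 for every p ≥ 1 and all b₀, b₁, …, b_p ∈ B (as holds for any B-valued circular element). Let b ∈ B and set Z = b + T. Then for every n ≥ 1, E((Z^n)* Z^n) ≥ (b^n)* b^n in the C*-order of B. -/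
namespace LinearMap

open ComplexStarModule

variable {A A' : Type*} [NonUnitalCStarAlgebra A] [PartialOrder A] [StarOrderedRing A]
  [NonUnitalCStarAlgebra A'] [PartialOrder A'] [StarOrderedRing A']

lemma isSelfAdjoint_map_of_map_nonneg (f : A →ₗ[ℂ] A') (hf : ∀ x, 0 ≤ x → 0 ≤ f x) {x : A}
    (hx : IsSelfAdjoint x) : IsSelfAdjoint (f x) := by
  rw [← CFC.posPart_sub_negPart x hx, map_sub]
  exact (IsSelfAdjoint.of_nonneg (hf _ (CFC.posPart_nonneg x))).sub
    (IsSelfAdjoint.of_nonneg (hf _ (CFC.negPart_nonneg x)))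

lemma map_star_of_map_nonneg (f : A →ₗ[ℂ] A') (hf : ∀ x, 0 ≤ x → 0 ≤ f x) (x : A) :
    f (star x) = star (f x) := by
  have hre := f.isSelfAdjoint_map_of_map_nonneg hf (ℜ x).2
  have him := f.isSelfAdjoint_map_of_map_nonneg hf (ℑ x).2
  conv_lhs => rw [← realPart_add_I_smul_imaginaryPart x]
  conv_rhs => rw [← realPart_add_I_smul_imaginaryPart x]
  simp only [star_add, star_smul, (ℜ x).2.star_eq, (ℑ x).2.star_eq, map_add, map_smul,
    map_neg, hre.star_eq, him.star_eq, Complex.star_def, Complex.conj_I, neg_smul]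

end LinearMap

section Words

variable {R A S : Type*} [Semiring R] [Ring A] [Module R A] [SetLike S A] [MulMemClass S A]
  [OneMemClass S A] {B : S} {E : A →ₗ[R] A} {T b : A}

lemma map_add_pow_mul_word_eq_zero
    (hT : ∀ b₀ ∈ B, ∀ l : List A, l ≠ [] → (∀ c ∈ l, c ∈ B) →
      E (b₀ * (l.map (fun c => T * c)).prod) = 0)
    (hb : b ∈ B) (m : ℕ) {c : A} (hc : c ∈ B) {l : List A} (hl : l ≠ []) (hlB : ∀ d ∈ l, d ∈ B) :
    E ((b + T) ^ m * (c * (l.map (fun d => T * d)).prod)) = 0 := by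
  induction m generalizing c l with
  | zero => simpa using hT c hc l hl hlB
  | succ m ih =>
    have hsplit : (b + T) ^ (m + 1) * (c * (l.map (fun d => T * d)).prod)
        = (b + T) ^ m * ((b * c) * (l.map (fun d => T * d)).prod)
          + (b + T) ^ m * (1 * ((c :: l).map (fun d => T * d)).prod) := by
      rw [List.map_cons, List.prod_cons, pow_succ]
      noncomm_ring
    rw [hsplit, map_add, ih (mul_mem hb hc) hl hlB,
      ih (one_mem B) (List.cons_ne_nil c l) (List.forall_mem_cons.2 ⟨hc, hlB⟩), add_zero]

end Words

namespace IsCondExp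

variable {A : Type*} [CStarAlgebra A] [PartialOrder A] [StarOrderedRing A]
  {B : StarSubalgebra ℂ A} {E : A →ₗ[ℂ] A}

lemma map_star (hE : IsCondExp B E) (x : A) : E (star x) = star (E x) :=
  E.map_star_of_map_nonneg hE.positive x

lemma map_mul_left (hE : IsCondExp B E) {b : A} (hb : b ∈ B) (x : A) : E (b * x) = b * E x := by
  simpa using hE.bimodule b hb 1 (one_mem B) x

lemma map_mul_right (hE : IsCondExp B E) (x : A) {b : A} (hb : b ∈ B) : E (x * b) = E x * b := by
  simpa using hE.bimodule 1 (one_mem B) b hb x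

lemma star_mul_self_le (hE : IsCondExp B E) (x : A) :
    star (E x) * E x ≤ E (star x * x) := by
  have hx : E x ∈ B := hE.mem_range x
  have hsx : star (E x) ∈ B := star_mem hx
  have key : E (star (x - E x) * (x - E x)) = E (star x * x) - star (E x) * E x := by
    simp only [star_sub, sub_mul, mul_sub, map_sub, hE.map_mul_left hsx, hE.map_mul_right _ hx,
      hE.map_star, hE.fixes _ hx]
    abel
  have := hE.positive _ (star_mul_self_nonneg (x - E x))
  rwa [key, sub_nonneg] at this

lemma map_add_pow (hE : IsCondExp B E) {T : A}
    (hT : ∀ b₀ ∈ B, ∀ l : List A, l ≠ [] → (∀ c ∈ l, c ∈ B) →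
      E (b₀ * (l.map (fun c => T * c)).prod) = 0)
    {b : A} (hb : b ∈ B) (m : ℕ) : E ((b + T) ^ m) = b ^ m := by
  induction m with
  | zero => simpa using hE.fixes 1 (one_mem B)
  | succ m ih =>
    have hT1 : E ((b + T) ^ m * T) = 0 := by
      simpa using map_add_pow_mul_word_eq_zero hT hb m (one_mem B) (List.cons_ne_nil 1 [])
        (by simp)
    rw [pow_succ, mul_add, map_add, hE.map_mul_right _ hb, ih, hT1, add_zero, pow_succ]

end IsCondExp

theorem star_pow_mul_pow_le_condexp_general
    {A : Type*} [CStarAlgebra A] [PartialOrder A] [StarOrderedRing A]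
    (B : StarSubalgebra ℂ A)
    (E : A →ₗ[ℂ] A) (hE : IsCondExp B E)
    (T : A)
    (hT : ∀ b₀ ∈ B, ∀ l : List A, l ≠ [] → (∀ c ∈ l, c ∈ B) →
      E (b₀ * (l.map (fun c => T * c)).prod) = 0)
    (b : A) (hb : b ∈ B) (n : ℕ) :
    star (b ^ n) * b ^ n ≤ E (star ((b + T) ^ n) * (b + T) ^ n) := by
  simpa only [hE.map_add_pow hT hb n] using hE.star_mul_self_le ((b + T) ^ n)

/-- Let `E` be a conditional expectation from a unital C*-algebra `A` onto a commutative unital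
C*-subalgebra `B`, and let `T ∈ A` be such that `E(b₀ T b₁ T b₂ ⋯ T bₚ) = 0` for all `p ≥ 1`
and `b₀, …, bₚ ∈ B` (as holds for any `B`-valued circular element).  Then for `b ∈ B` and
`Z = b + T`, we have `E((Zⁿ)* Zⁿ) ≥ (bⁿ)* bⁿ` for all `n ≥ 1`. -/
theorem star_pow_mul_pow_le_condexp
    {A : Type*} [CStarAlgebra A] [PartialOrder A] [StarOrderedRing A]
    (B : StarSubalgebra ℂ A) (hBclosed : IsClosed (B : Set A))
    (hBcomm : ∀ x ∈ B, ∀ y ∈ B, x * y = y * x)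
    (E : A →ₗ[ℂ] A) (hE : IsCondExp B E)
    (T : A)
    (hT : ∀ b₀ ∈ B, ∀ l : List A, l ≠ [] → (∀ c ∈ l, c ∈ B) →
      E (b₀ * (l.map (fun c => T * c)).prod) = 0)
    (b : A) (hb : b ∈ B) (n : ℕ) (hn : 1 ≤ n) :
    star (b ^ n) * b ^ n ≤ E (star ((b + T) ^ n) * (b + T) ^ n) :=
  star_pow_mul_pow_le_condexp_general B E hE T hT b hb n
end

section
/- Let A be a unital C*-algebra, B ⊆ A a commutative unital C*-subalgebra, and E : A → B a conditional expectation onto B. Let T ∈ A satisfy E(b₀ T b₁ T b₂ ⋯ T b_p) = 0 for every p ≥ 1 and all b₀, b₁, …, b_p ∈ B (as holds for any B-valued circular element). Let b ∈ B be invertible and suppose b^{-1} T is quasinilpotent. Then Z = b + T is invertible in A, and for every n ≥ 1, E((Z^{-n})* Z^{-n}) ≥ (b^{-n})* b^{-n} in the C*-order of B. -/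
/-!
Write `b + T = b (1 + q)` with `q = b⁻¹ T` quasinilpotent, so that `(b + T)⁻¹` is the limit of the
Neumann partial sums `∑_{k ≤ m} (-q)ᵏ b⁻¹`. Each partial sum is `b⁻¹` plus a linear combination of
words `b₀ T b₁ T ⋯ T bₚ` with `p ≥ 1` and letters `bᵢ ∈ B`; since these words are stable under
multiplication and under multiplication by `B` on either side, the `n`-th power of a partial sum
is `b⁻ⁿ` plus such words. The hypothesis says that `E` kills words and `E` is continuous, hence
`E((b + T)⁻ⁿ) = b⁻ⁿ`, and the inequality is the Kadison–Schwarz inequality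
`E(y)* E(y) ≤ E(y* y)` for the conditional expectation `E`.
-/

open Filter

open Topology Finset Pointwise

section Spectrum

variable {A : Type*} [NormedRing A] [NormedAlgebra ℂ A]

theorem spectralRadius_neg (a : A) : spectralRadius ℂ (-a) = spectralRadius ℂ a := by
  simp only [spectralRadius, ← spectrum.neg_eq, Set.mem_neg]
  exact (Equiv.neg ℂ).iSup_congr fun k => by simp

theorem isUnit_one_add_of_spectralRadius_lt_one {a : A} (ha : spectralRadius ℂ a < 1) :
    IsUnit (1 + a) := by
  simpa using spectrum.isUnit_one_sub_smul_of_lt_inv_radius (z := (-1 : ℂ)) (a := a)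
    (by simpa using ENNReal.one_lt_inv.2 ha)

theorem tendsto_pow_nhds_zero_of_spectralRadius_lt_one [CompleteSpace A] {a : A}
    (ha : spectralRadius ℂ a < 1) : Tendsto (a ^ ·) atTop (𝓝 0) := by
  obtain ⟨c, hac, hc1⟩ := exists_between ha
  lift c to NNReal using (hc1.trans ENNReal.one_lt_top).ne
  have hle : ∀ᶠ n : ℕ in atTop, ‖a ^ n‖₊ ≤ c ^ n := by
    have hgelfand := spectrum.pow_nnnorm_pow_one_div_tendsto_nhds_spectralRadius a
    filter_upwards [hgelfand.eventually_lt_const hac, eventually_gt_atTop 0] with n hn hn0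
    have hpos : (0 : ℝ) < n := by exact_mod_cast hn0
    rw [← ENNReal.coe_rpow_of_nonneg _ (by positivity), ENNReal.coe_lt_coe, one_div,
      NNReal.rpow_inv_lt_iff hpos, NNReal.rpow_natCast] at hn
    exact hn.le
  exact squeeze_zero_norm' (hle.mono fun n hn => by exact_mod_cast hn)
    (by simpa using tendsto_pow_atTop_nhds_zero_of_lt_one c.coe_nonneg (by exact_mod_cast hc1))

end Spectrum

section Words

variable {A S : Type*} [Monoid A] [SetLike S A]

inductive IsWord (B : S) (T : A) : A → Prop
  | single {b₀ b₁ : A} : b₀ ∈ B → b₁ ∈ B → IsWord B T (b₀ * T * b₁)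
  | cons {b₀ x : A} : b₀ ∈ B → IsWord B T x → IsWord B T (b₀ * T * x)

namespace IsWord

variable {B : S} {T x y β γ : A}

theorem exists_eq_mul_prod (hx : IsWord B T x) :
    ∃ b₀ ∈ B, ∃ l : List A, l ≠ [] ∧ (∀ c ∈ l, c ∈ B) ∧ x = b₀ * (l.map (T * ·)).prod := by
  induction hx with
  | single h₀ h₁ => exact ⟨_, h₀, [_], List.cons_ne_nil _ _, by simpa using h₁, by simp [mul_assoc]⟩
  | cons h₀ _ ih =>
    obtain ⟨b₁, h₁, l, -, hl, rfl⟩ := ih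
    exact ⟨_, h₀, b₁ :: l, List.cons_ne_nil _ _, List.forall_mem_cons.2 ⟨h₁, hl⟩,
      by simp [mul_assoc]⟩

theorem pow_mul (hβ : β ∈ B) (hγ : γ ∈ B) (k : ℕ) : IsWord B T ((β * T) ^ (k + 1) * γ) := by
  induction k with
  | zero => simpa using single hβ hγ
  | succ k ih => simpa only [pow_succ' _ (k + 1), mul_assoc] using cons hβ ih

variable [MulMemClass S A]

theorem mul_left (hβ : β ∈ B) (hx : IsWord B T x) : IsWord B T (β * x) := by
  cases hx with
  | single h₀ h₁ => simpa only [mul_assoc] using single (mul_mem hβ h₀) h₁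
  | cons h₀ hx => simpa only [mul_assoc] using cons (mul_mem hβ h₀) hx

theorem mul_right (hx : IsWord B T x) (hβ : β ∈ B) : IsWord B T (x * β) := by
  induction hx with
  | single h₀ h₁ => simpa only [mul_assoc] using single h₀ (mul_mem h₁ hβ)
  | cons h₀ _ ih => simpa only [mul_assoc] using cons h₀ ih

theorem mul (hx : IsWord B T x) (hy : IsWord B T y) : IsWord B T (x * y) := by
  induction hx with
  | single h₀ h₁ => simpa only [mul_assoc] using cons h₀ (hy.mul_left h₁)
  | cons h₀ _ ih => simpa only [mul_assoc] using cons h₀ ih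

end IsWord

end Words

theorem Submodule.mul_mem_span_of_mul_subset {R A : Type*} [CommSemiring R] [Semiring A]
    [Algebra R A] {s t u : Set A} (h : s * t ⊆ u) {x y : A} (hx : x ∈ span R s)
    (hy : y ∈ span R t) : x * y ∈ span R u :=
  span_mono h (span_mul_span R s t ▸ mul_mem_mul hx hy)

section WordSpan

variable (R : Type*) {A S : Type*} [CommRing R] [Ring A] [Algebra R A] [SetLike S A]

def wordSpan (B : S) (T : A) : Submodule R A := Submodule.span R {x | IsWord B T x}

variable {R} {B : S} {T x y β : A}

theorem wordSpan_le_ker {M : Type*} [AddCommGroup M] [Module R M] {E : A →ₗ[R] M}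
    (hE : ∀ b₀ ∈ B, ∀ l : List A, l ≠ [] → (∀ c ∈ l, c ∈ B) →
      E (b₀ * (l.map (T * ·)).prod) = 0) :
    wordSpan R B T ≤ LinearMap.ker E :=
  Submodule.span_le.2 fun _ hx => by
    obtain ⟨b₀, h₀, l, hl, hlB, rfl⟩ := hx.exists_eq_mul_prod
    exact hE b₀ h₀ l hl hlB

variable [SubmonoidClass S A]

theorem mul_mem_wordSpan_of_mem_left (hβ : β ∈ B) (hx : x ∈ wordSpan R B T) :
    β * x ∈ wordSpan R B T :=
  Submodule.mul_mem_span_of_mul_subset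
    (Set.mul_subset_iff.2 fun _ h _ hy => (Set.mem_singleton_iff.1 h) ▸ hy.mul_left hβ)
    (Submodule.mem_span_singleton_self β) hx

theorem mul_mem_wordSpan_of_mem_right (hx : x ∈ wordSpan R B T) (hβ : β ∈ B) :
    x * β ∈ wordSpan R B T :=
  Submodule.mul_mem_span_of_mul_subset
    (Set.mul_subset_iff.2 fun _ hx _ h => (Set.mem_singleton_iff.1 h) ▸ hx.mul_right hβ)
    hx (Submodule.mem_span_singleton_self β)

theorem mul_mem_wordSpan (hx : x ∈ wordSpan R B T) (hy : y ∈ wordSpan R B T) :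
    x * y ∈ wordSpan R B T :=
  Submodule.mul_mem_span_of_mul_subset (Set.mul_subset_iff.2 fun _ hx _ hy => hx.mul hy) hx hy

theorem pow_sub_pow_mem_wordSpan (hβ : β ∈ B) (hx : x - β ∈ wordSpan R B T) (n : ℕ) :
    x ^ n - β ^ n ∈ wordSpan R B T := by
  induction n with
  | zero => simp
  | succ n ih =>
    have h : x ^ (n + 1) - β ^ (n + 1) =
        (x ^ n - β ^ n) * β + (x ^ n - β ^ n) * (x - β) + β ^ n * (x - β) := by
      noncomm_ring
    rw [h]
    exact add_mem (add_mem (mul_mem_wordSpan_of_mem_right ih hβ) (mul_mem_wordSpan ih hx))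
      (mul_mem_wordSpan_of_mem_left (pow_mem hβ n) hx)

theorem map_pow_eq_of_tendsto [TopologicalSpace A] [ContinuousMul A] [T2Space A]
    {E : A →ₗ[R] A} (hEc : Continuous E) (hEw : wordSpan R B T ≤ LinearMap.ker E)
    (hfix : ∀ b ∈ B, E b = b) (hβ : β ∈ B) {s : ℕ → A} {w : A} (hs : Tendsto s atTop (𝓝 w))
    (hsβ : ∀ m, s m - β ∈ wordSpan R B T) (n : ℕ) : E (w ^ n) = β ^ n := by
  have h : ∀ m, E (s m ^ n) = β ^ n := fun m => by
    rw [← sub_add_cancel (s m ^ n) (β ^ n), map_add,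
      hEw (pow_sub_pow_mem_wordSpan hβ (hsβ m) n), hfix _ (pow_mem hβ n), zero_add]
  have hlim : Tendsto (fun m => E (s m ^ n)) atTop (𝓝 (E (w ^ n))) :=
    (hEc.tendsto _).comp (hs.pow n)
  simp only [h, tendsto_const_nhds_iff] at hlim
  exact hlim.symm

end WordSpan

theorem tendsto_geom_sum_neg_mul_nhds_inverse {R : Type*} [Ring R] [TopologicalSpace R]
    [IsTopologicalRing R] {b b' q : R} (hbb' : b * b' = 1) (hu : IsUnit (b * (1 + q)))
    (hq : Tendsto ((-q) ^ ·) atTop (𝓝 0)) :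
    Tendsto (fun m => (∑ k ∈ range m, (-q) ^ k) * b') atTop
      (𝓝 (Ring.inverse (b * (1 + q)))) := by
  have h (m : ℕ) : b * (1 + q) * ((∑ k ∈ range m, (-q) ^ k) * b') = 1 - b * (-q) ^ m * b' :=
    calc b * (1 + q) * ((∑ k ∈ range m, (-q) ^ k) * b')
        = b * ((1 - -q) * ∑ k ∈ range m, (-q) ^ k) * b' := by
          rw [sub_neg_eq_add]; simp only [mul_assoc]
      _ = 1 - b * (-q) ^ m * b' := by rw [mul_neg_geom_sum, mul_sub, mul_one, sub_mul, hbb']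
  have hlim := (((hq.const_mul b).mul_const b').const_sub 1).const_mul (Ring.inverse (b * (1 + q)))
  simpa only [← h, Ring.inverse_mul_cancel_left _ _ hu, mul_zero, zero_mul, sub_zero, mul_one]
    using hlim

theorem LinearMap.map_star_of_forall_nonneg {A B : Type*} [NonUnitalCStarAlgebra A]
    [PartialOrder A] [StarOrderedRing A] [NonUnitalRing B] [StarRing B] [PartialOrder B]
    [StarOrderedRing B] [Module ℂ B] [StarModule ℂ B] (f : A →ₗ[ℂ] B)
    (hf : ∀ x, 0 ≤ x → 0 ≤ f x) (x : A) : f (star x) = star (f x) := by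
  obtain ⟨y, hy, -, rfl⟩ := CStarAlgebra.exists_sum_four_nonneg x
  simp [star_sum, star_smul, (hy _).star_eq, (hf _ (hy _)).star_eq]

namespace IsCondExp

variable {A : Type*} [CStarAlgebra A] [PartialOrder A] [StarOrderedRing A]
  {B : StarSubalgebra ℂ A} {E : A →ₗ[ℂ] A}

theorem continuous (hE : IsCondExp B E) : Continuous E :=
  AddMonoidHomClass.continuous_of_bound E 1 fun x => by simpa using hE.contractive x

theorem star_map_mul_map_le (hE : IsCondExp B E) (y : A) :
    star (E y) * E y ≤ E (star y * y) := by
  set u := E y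
  have hu : u ∈ B := hE.mem_range y
  have hleft : E (star u * y) = star u * u := by
    simpa using hE.bimodule _ (star_mem hu) 1 B.one_mem y
  have hright : E (star y * u) = star u * u := by
    simpa [E.map_star_of_forall_nonneg hE.positive] using hE.bimodule 1 B.one_mem _ hu (star y)
  have hexpand : star (y - u) * (y - u) = star y * y - star y * u - star u * y + star u * u := by
    rw [star_sub]; noncomm_ring
  have h := hE.positive _ (star_mul_self_nonneg (y - u))
  rwa [hexpand, map_add, map_sub, map_sub, hleft, hright, hE.fixes _ (mul_mem (star_mem hu) hu),
    sub_add_cancel, sub_nonneg] at h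

end IsCondExp

theorem isUnit_add_and_star_pow_inv_mul_pow_inv_le_condexp_general
    {A : Type*} [CStarAlgebra A] [PartialOrder A] [StarOrderedRing A]
    (B : StarSubalgebra ℂ A)
    (E : A →ₗ[ℂ] A) (hE : IsCondExp B E)
    (T : A)
    (hT : ∀ b₀ ∈ B, ∀ l : List A, l ≠ [] → (∀ c ∈ l, c ∈ B) →
      E (b₀ * (l.map (fun c => T * c)).prod) = 0)
    (b b' : A) (hb' : b' ∈ B) (hbb' : b * b' = 1) (hb'b : b' * b = 1)
    (hq : spectralRadius ℂ (b' * T) = 0) :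
    IsUnit (b + T) ∧
      ∀ n : ℕ, 1 ≤ n →
        star (b' ^ n) * b' ^ n ≤
          E (star (Ring.inverse (b + T) ^ n) * Ring.inverse (b + T) ^ n) := by
  have hZ : b + T = b * (1 + b' * T) := by rw [mul_add, mul_one, ← mul_assoc, hbb', one_mul]
  have hq1 : spectralRadius ℂ (b' * T) < 1 := hq ▸ zero_lt_one
  have hunit : IsUnit (b * (1 + b' * T)) :=
    (Units.mk b b' hbb' hb'b).isUnit.mul (isUnit_one_add_of_spectralRadius_lt_one hq1)
  refine ⟨hZ ▸ hunit, fun n _ => ?_⟩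
  have hpow : Tendsto ((-(b' * T)) ^ ·) atTop (𝓝 0) :=
    tendsto_pow_nhds_zero_of_spectralRadius_lt_one (by rwa [spectralRadius_neg])
  have hS := (tendsto_add_atTop_iff_nat 1).2 (tendsto_geom_sum_neg_mul_nhds_inverse hbb' hunit hpow)
  have hSb' : ∀ m, (∑ k ∈ range (m + 1), (-(b' * T)) ^ k) * b' - b' ∈ wordSpan ℂ B T := fun m => by
    rw [sum_range_succ', add_mul, pow_zero, one_mul, add_sub_cancel_right, sum_mul]
    refine Submodule.sum_mem _ fun k _ => Submodule.subset_span ?_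
    rw [Set.mem_ofPred_eq, ← neg_mul]
    exact IsWord.pow_mul (neg_mem hb') hb' k
  have hEw : E (Ring.inverse (b + T) ^ n) = b' ^ n := by
    rw [hZ]
    exact map_pow_eq_of_tendsto hE.continuous (wordSpan_le_ker hT) hE.fixes hb' hS hSb' n
  simpa only [hEw] using hE.star_map_mul_map_le (Ring.inverse (b + T) ^ n)

/-- Let `E` be a conditional expectation from a unital C*-algebra `A` onto a commutative unital
C*-subalgebra `B`, and let `T ∈ A` be such that `E(b₀ T b₁ T b₂ ⋯ T bₚ) = 0` for all `p ≥ 1`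
and `b₀, …, bₚ ∈ B`.  Let `b ∈ B` be invertible, with inverse `b' ∈ B`, and suppose `b⁻¹ T` is
quasinilpotent (vanishing spectral radius).  Then `Z = b + T` is invertible and
`E((Z⁻ⁿ)* Z⁻ⁿ) ≥ (b⁻ⁿ)* b⁻ⁿ` for all `n ≥ 1`. -/
theorem isUnit_add_and_star_pow_inv_mul_pow_inv_le_condexp
    {A : Type*} [CStarAlgebra A] [PartialOrder A] [StarOrderedRing A]
    (B : StarSubalgebra ℂ A) (hBclosed : IsClosed (B : Set A))
    (hBcomm : ∀ x ∈ B, ∀ y ∈ B, x * y = y * x)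
    (E : A →ₗ[ℂ] A) (hE : IsCondExp B E)
    (T : A)
    (hT : ∀ b₀ ∈ B, ∀ l : List A, l ≠ [] → (∀ c ∈ l, c ∈ B) →
      E (b₀ * (l.map (fun c => T * c)).prod) = 0)
    (b b' : A) (hb : b ∈ B) (hb' : b' ∈ B) (hbb' : b * b' = 1) (hb'b : b' * b = 1)
    (hq : spectralRadius ℂ (b' * T) = 0) :
    IsUnit (b + T) ∧
      ∀ n : ℕ, 1 ≤ n →
        star (b' ^ n) * b' ^ n ≤
          E (star (Ring.inverse (b + T) ^ n) * Ring.inverse (b + T) ^ n) :=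
  isUnit_add_and_star_pow_inv_mul_pow_inv_le_condexp_general B E hE T hT b b' hb' hbb' hb'b hq
end

section
/- Let M be a unital C*-algebra, p ∈ M a projection (self-adjoint idempotent), and q = 1 − p. Let Z₁, Z₂, C, W ∈ M satisfy Z₁ = p Z₁ p, C = p C q, Z₂ = q Z₂ q, W = q W q, and Z₂ W = W Z₂ = q (so W is the inverse of Z₂ in the corner algebra q M q). Suppose (limsup_{k→∞} ‖Z₁^k‖^{1/k}) · (limsup_{k→∞} ‖W^k‖^{1/k}) < 1. Then the series Y = Σ_{k=0}^∞ Z₁^k C W^{k+1} converges in norm, the element S = 1 + Y is invertible with S^{-1} = 1 − Y, and S (Z₁ + Z₂) S^{-1} = Z₁ + C + Z₂. -/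
open Filter Topology

/-!
If `q = 1 - p`, then `Y = ∑ Z₁ᵏ C Wᵏ⁺¹` lies in the corner `p M q`, so `Y² = 0` and `1 + Y` has
inverse `1 - Y`. The root-test hypothesis makes the series converge geometrically, and since
`W Z₂ = q` the series telescopes to the Sylvester equation `Y Z₂ - Z₁ Y = C`, which is exactly
what conjugating `Z₁ + Z₂` by `1 + Y` needs.
-/

section RootTest

variable {R : Type*} [NormedRing R]

lemma isBoundedUnder_le_norm_pow_rpow_one_div (a : R) :
    IsBoundedUnder (· ≤ ·) atTop fun k : ℕ => ‖a ^ k‖ ^ ((1 : ℝ) / k) := by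
  refine isBoundedUnder_of ⟨max ‖a‖ 1, fun k => ?_⟩
  rcases Nat.eq_zero_or_pos k with rfl | hk
  · simp
  · calc ‖a ^ k‖ ^ ((1 : ℝ) / k) ≤ (‖a‖ ^ k) ^ ((1 : ℝ) / k) := by
          gcongr
          exact norm_pow_le' a hk
      _ = ‖a‖ := by rw [one_div, Real.pow_rpow_inv_natCast (norm_nonneg a) hk.ne']
      _ ≤ max ‖a‖ 1 := le_max_left _ _

lemma limsup_norm_pow_rpow_one_div_nonneg (a : R) :
    0 ≤ limsup (fun k : ℕ => ‖a ^ k‖ ^ ((1 : ℝ) / k)) atTop :=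
  le_limsup_of_frequently_le (.of_forall fun _ => by positivity)
    (isBoundedUnder_le_norm_pow_rpow_one_div a)

lemma eventually_norm_pow_le_of_limsup_lt {a : R} {r : ℝ}
    (h : limsup (fun k : ℕ => ‖a ^ k‖ ^ ((1 : ℝ) / k)) atTop < r) :
    ∀ᶠ k : ℕ in atTop, ‖a ^ k‖ ≤ r ^ k := by
  filter_upwards [eventually_lt_of_limsup_lt h (isBoundedUnder_le_norm_pow_rpow_one_div a),
    eventually_gt_atTop 0] with k hk hk0
  calc ‖a ^ k‖ = (‖a ^ k‖ ^ ((1 : ℝ) / k)) ^ k := by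
        rw [one_div, Real.rpow_inv_natCast_pow (norm_nonneg _) hk0.ne']
    _ ≤ r ^ k := by gcongr

lemma exists_pos_add_mul_add_lt_one {x y : ℝ} (h : x * y < 1) :
    ∃ ε > 0, (x + ε) * (y + ε) < 1 := by
  have hlim : Tendsto (fun ε => (x + ε) * (y + ε)) (𝓝[>] 0) (𝓝 (x * y)) :=
    tendsto_nhdsWithin_of_tendsto_nhds <|
      (by fun_prop : Continuous fun ε : ℝ => (x + ε) * (y + ε)).tendsto' 0 _ (by simp)
  exact ((hlim.eventually (gt_mem_nhds h)).and self_mem_nhdsWithin).exists.imp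
    fun ε hε => ⟨hε.2, hε.1⟩

lemma summable_pow_mul_mul_pow [CompleteSpace R] (a b c : R)
    (h : limsup (fun k : ℕ => ‖a ^ k‖ ^ ((1 : ℝ) / k)) atTop *
      limsup (fun k : ℕ => ‖b ^ k‖ ^ ((1 : ℝ) / k)) atTop < 1) :
    Summable fun k => a ^ k * c * b ^ k := by
  set La := limsup (fun k : ℕ => ‖a ^ k‖ ^ ((1 : ℝ) / k)) atTop
  set Lb := limsup (fun k : ℕ => ‖b ^ k‖ ^ ((1 : ℝ) / k)) atTop
  obtain ⟨ε, hε, hlt⟩ := exists_pos_add_mul_add_lt_one h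
  have hLa : 0 ≤ La := limsup_norm_pow_rpow_one_div_nonneg a
  have hLb : 0 ≤ Lb := limsup_norm_pow_rpow_one_div_nonneg b
  have hgeom := (summable_geometric_of_lt_one (by positivity) hlt).mul_left ‖c‖
  refine hgeom.of_norm_bounded_eventually_nat ?_
  filter_upwards [eventually_norm_pow_le_of_limsup_lt (lt_add_of_pos_right La hε),
    eventually_norm_pow_le_of_limsup_lt (lt_add_of_pos_right Lb hε)] with k ha hb
  calc ‖a ^ k * c * b ^ k‖ ≤ ‖a ^ k‖ * ‖c‖ * ‖b ^ k‖ := norm_mul₃_le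
    _ ≤ (La + ε) ^ k * ‖c‖ * (Lb + ε) ^ k := by gcongr
    _ = ‖c‖ * ((La + ε) * (Lb + ε)) ^ k := by rw [mul_pow]; ring

end RootTest

section Corner

variable {R : Type*} [Ring R] {p : R}

lemma IsIdempotentElem.mul_eq_self_of_eq_mul_mul {e x y : R} (he : IsIdempotentElem e)
    (hx : x = y * x * e) : x * e = x := by
  rw [hx, mul_assoc, he.eq]

lemma IsIdempotentElem.mul_eq_self_of_eq_mul_mul' {e x y : R} (he : IsIdempotentElem e)
    (hx : x = e * x * y) : e * x = x := by
  rw [hx, ← mul_assoc, ← mul_assoc, he.eq]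

lemma IsIdempotentElem.mul_eq_zero_of_mul_one_sub (hp : IsIdempotentElem p) {x y : R}
    (hx : x * (1 - p) = x) (hy : p * y = y) : x * y = 0 := by
  rw [← hx, ← hy, mul_assoc, ← mul_assoc (1 - p), hp.one_sub_mul_self, zero_mul, mul_zero]

lemma mul_pow_mul_eq_of_mul_eq {e a c : R} (hc : e * c = c) (ha : e * a = a) (k : ℕ) :
    e * (a ^ k * c) = a ^ k * c := by
  cases k with
  | zero => simpa using hc
  | succ k => rw [pow_succ', mul_assoc, ← mul_assoc e, ha]

lemma mul_pow_mul_eq_of_mul_eq' {e w c : R} (hc : c * e = c) (hw : w * e = w) (k : ℕ) :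
    c * w ^ k * e = c * w ^ k := by
  cases k with
  | zero => simpa using hc
  | succ k => rw [pow_succ, ← mul_assoc, mul_assoc _ w, hw]

lemma one_add_mul_one_sub_of_mul_self_eq_zero {y : R} (hy : y * y = 0) :
    (1 + y) * (1 - y) = 1 ∧ (1 - y) * (1 + y) = 1 := by
  rw [← (Commute.one_left y).mul_self_sub_mul_self_eq,
    ← (Commute.one_left y).mul_self_sub_mul_self_eq', hy]
  simp

lemma one_add_mul_add_mul_one_sub_of_sylvester (hp : IsIdempotentElem p) {a b c y : R}
    (ha : p * a = a) (hb : b * (1 - p) = b) (hc : c * (1 - p) = c)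
    (hpy : p * y = y) (hyq : y * (1 - p) = y) (hsyl : y * b = c + a * y) :
    (1 + y) * (a + b) * (1 - y) = a + c + b := by
  have hyy : y * y = 0 := hp.mul_eq_zero_of_mul_one_sub hyq hpy
  have hya : y * a = 0 := hp.mul_eq_zero_of_mul_one_sub hyq ha
  have hby : b * y = 0 := hp.mul_eq_zero_of_mul_one_sub hb hpy
  have hcy : c * y = 0 := hp.mul_eq_zero_of_mul_one_sub hc hpy
  calc (1 + y) * (a + b) * (1 - y)
      = a + b + (y * b) + y * a - a * y - b * y - y * a * y - (y * b) * y := by noncomm_ring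
    _ = a + c + b := by
      rw [hsyl, add_mul, mul_assoc a, hyy, hya, hby, hcy]
      simp only [zero_mul, mul_zero, add_zero, sub_zero]
      abel

end Corner

section Sylvester

variable {R : Type*} [Ring R] [TopologicalSpace R] [IsTopologicalRing R] [T2Space R]

lemma tsum_pow_mul_mul_pow_succ_mul {a c w z e : R} (hg : Summable fun k => a ^ k * c * w ^ k)
    (hc : c * e = c) (hw : w * e = w) (hwz : w * z = e) :
    (∑' k, a ^ k * c * w ^ (k + 1)) * z = c + a * ∑' k, a ^ k * c * w ^ (k + 1) := by
  have hf : Summable fun k => a ^ k * c * w ^ (k + 1) := by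
    simpa only [pow_succ, mul_assoc] using hg.mul_right w
  have hterm (k : ℕ) : a ^ k * c * w ^ (k + 1) * z = a ^ k * c * w ^ k := by
    rw [pow_succ, mul_assoc, mul_assoc, mul_assoc, hwz, ← mul_assoc c,
      mul_pow_mul_eq_of_mul_eq' hc hw, mul_assoc]
  calc (∑' k, a ^ k * c * w ^ (k + 1)) * z = ∑' k, a ^ k * c * w ^ k := by
        rw [← hf.tsum_mul_right]
        exact tsum_congr hterm
    _ = c + ∑' k, a * (a ^ k * c * w ^ (k + 1)) := by
        rw [hg.tsum_eq_zero_add]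
        simp only [pow_zero, one_mul, mul_one, pow_succ', mul_assoc]
    _ = c + a * ∑' k, a ^ k * c * w ^ (k + 1) := by rw [hf.tsum_mul_left]

end Sylvester

theorem exists_similarity_of_corner_data_general
    {M : Type*} [CStarAlgebra M]
    (p : M) (hp_idem : p * p = p)
    (Z₁ Z₂ C W : M)
    (hZ₁ : Z₁ = p * Z₁ * p)
    (hC : C = p * C * (1 - p))
    (hZ₂ : Z₂ = (1 - p) * Z₂ * (1 - p))
    (hW : W = (1 - p) * W * (1 - p))
    (hWZ₂ : W * Z₂ = 1 - p)
    (hrad : (limsup (fun k : ℕ => ‖Z₁ ^ k‖ ^ ((1 : ℝ) / k)) atTop) *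
        (limsup (fun k : ℕ => ‖W ^ k‖ ^ ((1 : ℝ) / k)) atTop) < 1) :
    ∃ Y : M,
      Tendsto (fun n : ℕ => ∑ k ∈ Finset.range n, Z₁ ^ k * C * W ^ (k + 1)) atTop (nhds Y) ∧
      (1 + Y) * (1 - Y) = 1 ∧ (1 - Y) * (1 + Y) = 1 ∧
      (1 + Y) * (Z₁ + Z₂) * (1 - Y) = Z₁ + C + Z₂ := by
  have hp : IsIdempotentElem p := hp_idem
  have hg := summable_pow_mul_mul_pow Z₁ W C hrad
  have hf : Summable fun k => Z₁ ^ k * C * W ^ (k + 1) := by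
    simpa only [pow_succ, mul_assoc] using hg.mul_right W
  have hCq := hp.one_sub.mul_eq_self_of_eq_mul_mul hC
  have hWq := hp.one_sub.mul_eq_self_of_eq_mul_mul hW
  have hpZ₁ := hp.mul_eq_self_of_eq_mul_mul' hZ₁
  set Y := ∑' k, Z₁ ^ k * C * W ^ (k + 1)
  have hpY : p * Y = Y := by
    rw [← hf.tsum_mul_left]
    refine tsum_congr fun k => ?_
    rw [← mul_assoc, mul_pow_mul_eq_of_mul_eq (hp.mul_eq_self_of_eq_mul_mul' hC) hpZ₁]
  have hYq : Y * (1 - p) = Y := by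
    rw [← hf.tsum_mul_right]
    refine tsum_congr fun k => ?_
    rw [mul_assoc (Z₁ ^ k), mul_assoc (Z₁ ^ k), mul_pow_mul_eq_of_mul_eq' hCq hWq]
  have hsyl : Y * Z₂ = C + Z₁ * Y := tsum_pow_mul_mul_pow_succ_mul hg hCq hWq hWZ₂
  obtain ⟨hinv, hinv'⟩ := one_add_mul_one_sub_of_mul_self_eq_zero
    (hp.mul_eq_zero_of_mul_one_sub hYq hpY)
  exact ⟨Y, hf.hasSum.tendsto_sum_nat, hinv, hinv',
    one_add_mul_add_mul_one_sub_of_sylvester hp hpZ₁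
      (hp.one_sub.mul_eq_self_of_eq_mul_mul hZ₂) hCq hpY hYq hsyl⟩

/-- Let `M` be a unital C*-algebra, `p ∈ M` a projection, `q = 1 - p`, and let
`Z₁ = p Z₁ p`, `C = p C q`, `Z₂ = q Z₂ q`, with `W = q W q` the inverse of `Z₂` in the corner
`q M q`.  If the product of the spectral-radius-type quantities
`limsup ‖Z₁^k‖^{1/k}` and `limsup ‖W^k‖^{1/k}` is `< 1`, then the series
`Y = ∑_{k=0}^∞ Z₁^k C W^{k+1}` converges in norm, `S = 1 + Y` is invertible with inverse
`1 - Y`, and `S (Z₁ + Z₂) S⁻¹ = Z₁ + C + Z₂`. -/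
theorem exists_similarity_of_corner_data
    {M : Type*} [CStarAlgebra M]
    (p : M) (hp_sa : star p = p) (hp_idem : p * p = p)
    (Z₁ Z₂ C W : M)
    (hZ₁ : Z₁ = p * Z₁ * p)
    (hC : C = p * C * (1 - p))
    (hZ₂ : Z₂ = (1 - p) * Z₂ * (1 - p))
    (hW : W = (1 - p) * W * (1 - p))
    (hZ₂W : Z₂ * W = 1 - p) (hWZ₂ : W * Z₂ = 1 - p)
    (hrad : (limsup (fun k : ℕ => ‖Z₁ ^ k‖ ^ ((1 : ℝ) / k)) atTop) *
        (limsup (fun k : ℕ => ‖W ^ k‖ ^ ((1 : ℝ) / k)) atTop) < 1) :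
    ∃ Y : M,
      Tendsto (fun n : ℕ => ∑ k ∈ Finset.range n, Z₁ ^ k * C * W ^ (k + 1)) atTop (nhds Y) ∧
      (1 + Y) * (1 - Y) = 1 ∧ (1 - Y) * (1 + Y) = 1 ∧
      (1 + Y) * (Z₁ + Z₂) * (1 - Y) = Z₁ + C + Z₂ :=
  exists_similarity_of_corner_data_general p hp_idem Z₁ Z₂ C W hZ₁ hC hZ₂ hW hWZ₂ hrad
end

section
/- Let ν be a finite Borel measure on ℝ and x₀ ∈ ℝ, and suppose lim_{δ→0⁺} ν((x₀−δ, x₀+δ) \ {x₀})/δ = ∞. Then for every N > 0 and every ε₀ > 0 there exist ε ∈ (0, ε₀) and real numbers r', s' with x₀ − ε < r' < s' < x₀ + ε such that ν([x₀−ε, r']) > 0, ν([s', x₀+ε]) > 0, and ν([x₀−ε, r']) + ν([s', x₀+ε]) > N·ε. -/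
/-!
Write `P t` for the punctured interval `puncturedIoo x₀ t`. Choose `ε < ε₀` so small that
`m := ν (P ε) > N ε`, and then, by continuity of measure from above (`⋂_{t>0} P t = ∅`), a much
smaller `t` with `ν (P t) < m - N ε`. Any two pieces `[x₀ - ε, r']`, `[s', x₀ + ε]` with
`x₀ - t ≤ r' < s' ≤ x₀ + t` cover `P ε` up to `P t`, so their total mass exceeds `N ε`.
To make both pieces charged, put the gap on a side of `x₀` whose outer strip `[x₀ - ε, x₀ - t]`
or `[x₀ + t, x₀ + ε]` has positive mass, and let the other piece reach across `x₀` far enough to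
contain `P (t / 2)`, which is charged because of the blow-up.
-/

open Filter MeasureTheory Topology Set

def puncturedIoo (x t : ℝ) : Set ℝ := Ioo (x - t) (x + t) \ {x}

lemma iInter_puncturedIoo_eq_empty (x : ℝ) : ⋂ t > 0, puncturedIoo x t = ∅ := by
  refine eq_empty_of_forall_notMem fun y hy => ?_
  simp only [mem_iInter] at hy
  have hyx : y ≠ x := (hy 1 one_pos).2
  have hdist : 0 < |y - x| := abs_pos.mpr (sub_ne_zero.mpr hyx)
  obtain ⟨⟨h₁, h₂⟩, -⟩ := hy |y - x| hdist
  exact (abs_sub_lt_iff.mpr ⟨by linarith, by linarith⟩ : |y - x| < |y - x|).false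

lemma tendsto_measure_puncturedIoo (ν : Measure ℝ) [IsLocallyFiniteMeasure ν] (x : ℝ) :
    Tendsto (fun t => ν (puncturedIoo x t)) (𝓝[>] 0) (𝓝 0) := by
  have hmono : ∀ i j : ℝ, 0 < i → i ≤ j → puncturedIoo x i ⊆ puncturedIoo x j :=
    fun i j _ hij => sdiff_subset_sdiff_left (Ioo_subset_Ioo (by linarith) (by linarith))
  have hfin : ∃ r > (0 : ℝ), ν (puncturedIoo x r) ≠ ⊤ :=
    ⟨1, one_pos, ((measure_mono sdiff_subset).trans_lt measure_Ioo_lt_top).ne⟩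
  have := tendsto_measure_biInter_gt (s := puncturedIoo x)
    (fun r _ => (measurableSet_Ioo.diff (measurableSet_singleton x)).nullMeasurableSet) hmono hfin
  rwa [iInter_puncturedIoo_eq_empty, measure_empty] at this

lemma measure_puncturedIoo_le (ν : Measure ℝ) {x ε t r s : ℝ} (hr : x - t ≤ r) (hs : s ≤ x + t) :
    ν (puncturedIoo x ε) ≤ ν (Icc (x - ε) r) + ν (Icc s (x + ε)) + ν (puncturedIoo x t) := by
  have hcover : puncturedIoo x ε ⊆ Icc (x - ε) r ∪ Icc s (x + ε) ∪ puncturedIoo x t := by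
    rintro y ⟨⟨h₁, h₂⟩, hy⟩
    rcases le_or_gt y r with hyr | hyr
    · exact Or.inl (Or.inl ⟨h₁.le, hyr⟩)
    rcases le_or_gt s y with hsy | hsy
    · exact Or.inl (Or.inr ⟨hsy, h₂.le⟩)
    · exact Or.inr ⟨⟨by linarith, by linarith⟩, hy⟩
  exact (measure_mono hcover).trans
    ((measure_union_le _ _).trans (add_le_add_left (measure_union_le _ _) _))

lemma exists_split_of_measure_puncturedIoo_lt (ν : Measure ℝ) {x ε t : ℝ} (ht : 0 < t) (htε : t < ε)
    (hhalf : 0 < ν (puncturedIoo x (t / 2))) (hlt : ν (puncturedIoo x t) < ν (puncturedIoo x ε)) :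
    ∃ r s, x - ε < r ∧ r < s ∧ s < x + ε ∧ 0 < ν (Icc (x - ε) r) ∧ 0 < ν (Icc s (x + ε)) ∧
      ν (puncturedIoo x ε) ≤ ν (Icc (x - ε) r) + ν (Icc s (x + ε)) + ν (puncturedIoo x t) := by
  by_cases hleft : ν (Icc (x - ε) (x - t)) = 0
  · have hright : 0 < ν (Icc (x + t) (x + ε)) := by
      have hcover := measure_puncturedIoo_le ν (ε := ε) (le_refl (x - t)) (le_refl (x + t))
      rw [hleft, zero_add] at hcover
      exact pos_iff_ne_zero.mpr fun h => hlt.not_ge (by simpa [h] using hcover)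
    refine ⟨x + t / 2, x + t, by linarith, by linarith, by linarith,
      hhalf.trans_le (measure_mono ?_), hright, measure_puncturedIoo_le ν (by linarith) le_rfl⟩
    rintro y ⟨⟨h₁, h₂⟩, -⟩
    exact ⟨by linarith, h₂.le⟩
  · refine ⟨x - t, x - t / 2, by linarith, by linarith, by linarith, pos_iff_ne_zero.mpr hleft,
      hhalf.trans_le (measure_mono ?_), measure_puncturedIoo_le ν le_rfl (by linarith)⟩
    rintro y ⟨⟨h₁, h₂⟩, -⟩
    exact ⟨h₁.le, by linarith⟩

/-- Let `ν` be a finite Borel measure on `ℝ` and `x₀ ∈ ℝ` with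
`ν((x₀ − δ, x₀ + δ) \ {x₀}) / δ → ∞` as `δ → 0⁺`.  Then for every `N > 0` and `ε₀ > 0`
there are `ε ∈ (0, ε₀)` and `x₀ − ε < r' < s' < x₀ + ε` such that the closed intervals
`[x₀ − ε, r']` and `[s', x₀ + ε]` both have positive measure and their measures add up
to more than `N ε`. -/
theorem exists_split_of_blowup
    (ν : Measure ℝ) [IsFiniteMeasure ν] (x₀ : ℝ)
    (hblow : Tendsto (fun δ : ℝ => (ν (Set.Ioo (x₀ - δ) (x₀ + δ) \ {x₀})).toReal / δ)
      (nhdsWithin 0 (Set.Ioi 0)) atTop)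
    (N : ℝ) (hN : 0 < N) (ε₀ : ℝ) (hε₀ : 0 < ε₀) :
    ∃ ε : ℝ, 0 < ε ∧ ε < ε₀ ∧ ∃ r' s' : ℝ,
      x₀ - ε < r' ∧ r' < s' ∧ s' < x₀ + ε ∧
      0 < ν (Set.Icc (x₀ - ε) r') ∧ 0 < ν (Set.Icc s' (x₀ + ε)) ∧
      N * ε < (ν (Set.Icc (x₀ - ε) r')).toReal + (ν (Set.Icc s' (x₀ + ε))).toReal := by
  obtain ⟨a, ha, hbig⟩ := mem_nhdsGT_iff_exists_Ioo_subset.mp (hblow.eventually_gt_atTop N)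
  have hmass : ∀ δ ∈ Ioo 0 a, N * δ < (ν (puncturedIoo x₀ δ)).toReal :=
    fun δ hδ => (lt_div_iff₀ hδ.1).mp (hbig hδ)
  have hpos : ∀ δ ∈ Ioo 0 a, 0 < ν (puncturedIoo x₀ δ) := fun δ hδ =>
    (ENNReal.toReal_pos_iff.mp ((mul_pos hN hδ.1).trans (hmass δ hδ))).1
  obtain ⟨ε, hε, hεa⟩ := exists_between (lt_min ha hε₀)
  obtain ⟨hεa, hεε₀⟩ := lt_min_iff.mp hεa
  have hgap := hmass ε ⟨hε, hεa⟩
  have hshrink := (ENNReal.tendsto_toReal ENNReal.zero_ne_top).comp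
    (tendsto_measure_puncturedIoo ν x₀)
  obtain ⟨t, hsmall, ht, htε⟩ : ∃ t,
      (ν (puncturedIoo x₀ t)).toReal < (ν (puncturedIoo x₀ ε)).toReal - N * ε ∧ t ∈ Ioo 0 ε :=
    ((hshrink.eventually (gt_mem_nhds (sub_pos.mpr hgap))).and (Ioo_mem_nhdsGT hε)).exists
  have hNε := mul_pos hN hε
  have hlt : ν (puncturedIoo x₀ t) < ν (puncturedIoo x₀ ε) :=
    (ENNReal.toReal_lt_toReal (measure_ne_top ν _) (measure_ne_top ν _)).mp (by linarith)
  obtain ⟨r, s, hr, hrs, hs, hleft, hright, hcover⟩ :=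
    exists_split_of_measure_puncturedIoo_lt ν ht htε (hpos (t / 2) ⟨by linarith, by linarith⟩) hlt
  refine ⟨ε, hε, hεε₀, r, s, hr, hrs, hs, hleft, hright, ?_⟩
  have hcover' := ENNReal.toReal_mono (by finiteness) hcover
  rw [ENNReal.toReal_add (by finiteness) (by finiteness),
    ENNReal.toReal_add (by finiteness) (by finiteness)] at hcover'
  linarith
end

section
/- Let a ∈ ℝ and let (w_n)_{n≥1} be a sequence of nonnegative reals with Σ_{n=1}^∞ w_n < ∞. Let ν = Σ_{n=1}^∞ w_n δ_{a + 1/n} be the corresponding finite Borel measure on ℝ (where δ_x is the Dirac point mass at x). If lim_{n→∞} n · Σ_{k=n}^∞ w_k = ∞, then lim_{δ→0⁺} ν((a−δ, a+δ) \ {a})/δ = ∞. -/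
/-!
Write `T m = ∑_{k ≥ m} w_k`. For `δ > 0` and `m = ⌊1/δ⌋₊`, every atom `a + 1/n` with `n > m`
lies in the punctured interval, so `ν((a - δ, a + δ) \ {a}) ≥ T (m + 1)`, while `1/δ ≥ m`.
Hence the quotient is at least `m · T (m + 1) = (n - 1) T n` at `n = m + 1 → ∞`, and
`(n - 1) T n = n T n - T n → ∞` because the tails `T n` tend to `0`.
-/

open Filter MeasureTheory Topology ENNReal

namespace MeasureTheory.Measure

variable {α : Type*} [MeasurableSpace α]

lemma sum_smul_dirac_apply_le_tsum {ι : Type*} (c : ι → ℝ≥0∞) (x : ι → α) (s : Set α) :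
    sum (fun i => c i • dirac (x i)) s ≤ ∑' i, c i := by
  calc sum (fun i => c i • dirac (x i)) s ≤ sum (fun i => c i • dirac (x i)) Set.univ :=
        measure_mono (Set.subset_univ s)
    _ = ∑' i, c i := by simp [sum_apply _ MeasurableSet.univ]

lemma tsum_shift_le_sum_smul_dirac_apply (c : ℕ → ℝ≥0∞) (x : ℕ → α) {s : Set α} {N : ℕ}
    (hx : ∀ n, N ≤ n → x n ∈ s) :
    ∑' k, c (N + k) ≤ sum (fun n => c n • dirac (x n)) s := by
  calc ∑' k, c (N + k) = ∑' k, (c (N + k) • dirac (x (N + k))) s := by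
        congr 1 with k
        simp [dirac_apply_of_mem (hx (N + k) (Nat.le_add_right N k))]
    _ ≤ ∑' n, (c n • dirac (x n)) s :=
        ENNReal.tsum_comp_le_tsum_of_injective (add_right_injective N) _
    _ ≤ sum (fun n => c n • dirac (x n)) s := le_sum_apply _ s

end MeasureTheory.Measure

lemma tendsto_sub_one_mul_tsum_nat_add {w : ℕ → ℝ}
    (h : Tendsto (fun n : ℕ => (n : ℝ) * ∑' k, w (n + k)) atTop atTop) :
    Tendsto (fun n : ℕ => ((n : ℝ) - 1) * ∑' k, w (n + k)) atTop atTop := by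
  have htail : Tendsto (fun n : ℕ => -∑' k, w (n + k)) atTop (𝓝 (-0)) := by
    simpa only [add_comm] using (tendsto_sum_nat_add w).neg
  convert h.atTop_add htail using 2 with n
  ring

lemma tendsto_floor_inv_add_one_nhdsGT_zero :
    Tendsto (fun δ : ℝ => ⌊δ⁻¹⌋₊ + 1) (𝓝[>] 0) atTop :=
  (tendsto_add_atTop_nat 1).comp (tendsto_nat_floor_atTop.comp tendsto_inv_nhdsGT_zero)

lemma add_one_div_mem_Ioo_diff_singleton {a δ : ℝ} (hδ : 0 < δ) {n : ℕ} (hn : ⌊δ⁻¹⌋₊ ≤ n) :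
    a + 1 / ((n : ℝ) + 1) ∈ Set.Ioo (a - δ) (a + δ) \ {a} := by
  have hpos : 0 < 1 / ((n : ℝ) + 1) := by positivity
  have hlt : 1 / ((n : ℝ) + 1) < δ := by
    have : δ⁻¹ < (n : ℝ) + 1 :=
      (Nat.lt_floor_add_one _).trans_le (by exact_mod_cast Nat.add_le_add_right hn 1)
    rw [one_div]
    exact (inv_lt_comm₀ hδ (by positivity)).mp this
  refine ⟨⟨by linarith, by linarith⟩, ?_⟩
  simpa using hpos.ne'

lemma floor_inv_mul_tsum_le_measure_div {a δ : ℝ} (hδ : 0 < δ) {w : ℕ → ℝ} (hw : ∀ n, 0 ≤ w n)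
    (hsum : Summable w) :
    (⌊δ⁻¹⌋₊ : ℝ) * ∑' k, w (⌊δ⁻¹⌋₊ + 1 + k) ≤
      (Measure.sum (fun n : ℕ => ENNReal.ofReal (w (n + 1)) •
        Measure.dirac (a + 1 / ((n : ℝ) + 1))) (Set.Ioo (a - δ) (a + δ) \ {a})).toReal / δ := by
  set m := ⌊δ⁻¹⌋₊
  set ν := Measure.sum (fun n : ℕ => ENNReal.ofReal (w (n + 1)) •
    Measure.dirac (a + 1 / ((n : ℝ) + 1)))
  set s := Set.Ioo (a - δ) (a + δ) \ {a}
  have hmeas : ENNReal.ofReal (∑' k, w (m + 1 + k)) ≤ ν s := by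
    rw [ENNReal.ofReal_tsum_of_nonneg (fun _ => hw _) (hsum.comp_injective (add_right_injective _))]
    simpa only [add_right_comm] using Measure.tsum_shift_le_sum_smul_dirac_apply _ _
      fun _ hn => add_one_div_mem_Ioo_diff_singleton hδ hn
  have hfin : ν s ≠ ∞ := by
    refine ne_top_of_le_ne_top ?_ (Measure.sum_smul_dirac_apply_le_tsum _ _ s)
    rw [← ENNReal.ofReal_tsum_of_nonneg (fun _ => hw _) (hsum.comp_injective (add_left_injective 1))]
    exact ENNReal.ofReal_ne_top
  have htail : ∑' k, w (m + 1 + k) ≤ (ν s).toReal :=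
    (ENNReal.ofReal_le_iff_le_toReal hfin).mp hmeas
  have hm : (m : ℝ) ≤ δ⁻¹ := Nat.floor_le (inv_nonneg.mpr hδ.le)
  calc (m : ℝ) * ∑' k, w (m + 1 + k) ≤ δ⁻¹ * (ν s).toReal :=
        mul_le_mul hm htail (tsum_nonneg fun _ => hw _) (inv_nonneg.mpr hδ.le)
    _ = (ν s).toReal / δ := inv_mul_eq_div _ _

/-- Let `a ∈ ℝ` and let `(wₙ)_{n ≥ 1}` be nonnegative reals with `∑ wₙ < ∞`, and let
`ν = ∑_{n ≥ 1} wₙ δ_{a + 1/n}` be the corresponding finite Borel measure on `ℝ`.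
If `n ∑_{k=n}^∞ w_k → ∞`, then `ν((a − δ, a + δ) \ {a}) / δ → ∞` as `δ → 0⁺`. -/
theorem blowup_of_dirac_sum
    (a : ℝ) (w : ℕ → ℝ) (hw : ∀ n, 0 ≤ w n) (hsum : Summable w)
    (ν : Measure ℝ)
    (hν : ν = Measure.sum
      (fun n : ℕ => ENNReal.ofReal (w (n + 1)) • Measure.dirac (a + 1 / ((n : ℝ) + 1))))
    (hlim : Tendsto (fun n : ℕ => (n : ℝ) * ∑' k : ℕ, w (n + k)) atTop atTop) :
    Tendsto (fun δ : ℝ => (ν (Set.Ioo (a - δ) (a + δ) \ {a})).toReal / δ)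
      (nhdsWithin 0 (Set.Ioi 0)) atTop := by
  subst hν
  have hblowup := (tendsto_sub_one_mul_tsum_nat_add hlim).comp tendsto_floor_inv_add_one_nhdsGT_zero
  refine tendsto_atTop_mono' _ ?_ hblowup
  filter_upwards [self_mem_nhdsWithin] with δ (hδ : 0 < δ)
  simpa only [Function.comp_apply, Nat.cast_add_one, add_sub_cancel_right]
    using floor_inv_mul_tsum_le_measure_div hδ hw hsum
end
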